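/- arXiv:0712.1656 — 7 statements merged into one kernel-verified Lean document; each statement's English description precedes it below -/
import Mathlib

section
/- For all positive integers a, b and all complex z with |z| < 1: Li_{a,b}(z) = (-1)^b * sum_{k=1}^{a} C(a+b-k-1, b-1) * Li_{k, a+b-k}(z) + sum_{k=1}^{b} (-1)^{b-k} * C(a+b-k-1, a-1) * Li_k(z) * Li_{a+b-k}(z). -/
/-!
Write the index pair as `n₁ = n₂ + d` with `n₂, d ≥ 1`. With `X = 1/n₁`, `Y = 1/n₂`, `D = 1/d`
we have `X Y = D (Y - X)`, and iterating this relation expands `X^a Y^b` into monomials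
`X^k D^(a+b-k)` and `Y^k D^(a+b-k)` with binomial coefficients given by Pascal's rule.
Multiplying by `z^(n₁)` and summing over `n₂, d ≥ 1`, the first family of monomials sums to
`Li_{k,a+b-k}(z)`, while in the second `z^(n₁) = z^(n₂) z^d` factors and the sum is
`Li_k(z) Li_{a+b-k}(z)`.
-/

open scoped BigOperators

/-- Multiple polylogarithm `Li_{s_1,...,s_l}(z) = ∑_{n_1 > ... > n_l ≥ 1} z^{n_1}/(n_1^{s_1}⋯n_l^{s_l})`. -/
noncomputable def multiLi (s : List ℕ) (z : ℂ) : ℂ :=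
  ∑' f : {f : Fin s.length → ℕ // StrictAnti f ∧ ∀ i, 1 ≤ f i},
    (if h : 0 < s.length then z ^ f.1 ⟨0, h⟩ else 1) /
      ∏ i, (f.1 i : ℂ) ^ s.get i

open Finset

section PartialFraction

variable {R : Type*} [CommRing R]

/-- The coefficient `C(a+b-k-1, a-k)`, rather than the equal `C(a+b-k-1, b-1)`, keeps the
boundary cases `a = 0` and `b = 0` correct under truncated subtraction. -/
def partialFractionSum (X D : R) (a b : ℕ) : R :=
  ∑ k ∈ Icc 1 a, ((a + b - k - 1).choose (a - k) : R) * X ^ k * D ^ (a + b - k)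

@[simp]
lemma partialFractionSum_zero_left (X D : R) (b : ℕ) : partialFractionSum X D 0 b = 0 := by
  simp [partialFractionSum]

lemma partialFractionSum_zero_right (X D : R) {a : ℕ} (ha : a ≠ 0) :
    partialFractionSum X D a 0 = X ^ a := by
  rw [partialFractionSum, sum_eq_single a]
  · simp
  · intro k hk hka
    rw [Nat.choose_eq_zero_of_lt (by grind), Nat.cast_zero, zero_mul, zero_mul]
  · simp
    omega

lemma partialFractionSum_succ_succ (X D : R) (a b : ℕ) :
    partialFractionSum X D (a + 1) (b + 1) =
      D * (partialFractionSum X D a (b + 1) + partialFractionSum X D (a + 1) b) := by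
  have pascal : ∀ k ∈ Icc 1 a,
      ((a + 1 + (b + 1) - k - 1).choose (a + 1 - k) : R) * X ^ k * D ^ (a + 1 + (b + 1) - k) =
        D * (((a + (b + 1) - k - 1).choose (a - k) : R) * X ^ k * D ^ (a + (b + 1) - k) +
          ((a + 1 + b - k - 1).choose (a + 1 - k) : R) * X ^ k * D ^ (a + 1 + b - k)) := by
    intro k hk
    have hka : k ≤ a := (mem_Icc.mp hk).2
    rw [show a + 1 + (b + 1) - k - 1 = a + b - k + 1 by omega,
      show a + 1 - k = a - k + 1 by omega, Nat.choose_succ_succ',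
      show a + (b + 1) - k - 1 = a + b - k by omega, show a + 1 + b - k - 1 = a + b - k by omega,
      show a + 1 + (b + 1) - k = a + b - k + 2 by omega,
      show a + (b + 1) - k = a + b - k + 1 by omega, show a + 1 + b - k = a + b - k + 1 by omega]
    push_cast
    ring
  rw [partialFractionSum, partialFractionSum, partialFractionSum, sum_Icc_succ_top (by omega),
    sum_Icc_succ_top (by omega), sum_congr rfl pascal, ← mul_sum, sum_add_distrib]
  simp only [show a + 1 + (b + 1) - (a + 1) = b + 1 by omega,
    show a + 1 + b - (a + 1) = b by omega, Nat.sub_self, Nat.choose_zero_right]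
  ring

/-- The relation `X * Y = D * (Y - X)` is invariant under `(X, Y, D) ↦ (Y, X, -D)`, which is why
the `Y`-part is again a `partialFractionSum`. -/
theorem pow_mul_pow_eq_partialFractionSum {X Y D : R} (h : X * Y = D * (Y - X)) :
    ∀ a b : ℕ, a ≠ 0 ∨ b ≠ 0 →
      X ^ a * Y ^ b = (-1) ^ b * partialFractionSum X D a b +
        (-1) ^ a * partialFractionSum Y (-D) b a
  | 0, b, hb => by
    simp [partialFractionSum_zero_right Y (-D) (hb.resolve_left (by simp))]
  | a + 1, 0, _ => by simp [partialFractionSum_zero_right X D a.succ_ne_zero]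
  | a + 1, b + 1, _ => by
    have ih₁ := pow_mul_pow_eq_partialFractionSum h a (b + 1) (by simp)
    have ih₂ := pow_mul_pow_eq_partialFractionSum h (a + 1) b (by simp)
    rw [partialFractionSum_succ_succ, partialFractionSum_succ_succ]
    linear_combination X ^ a * Y ^ b * h + D * ih₁ - D * ih₂

theorem pow_mul_pow_eq_sum {X Y D : R} (h : X * Y = D * (Y - X)) {a b : ℕ} (ha : 1 ≤ a)
    (hb : 1 ≤ b) :
    X ^ a * Y ^ b =
      (-1) ^ b * ∑ k ∈ Icc 1 a, ((a + b - k - 1).choose (b - 1) : R) * (X ^ k * D ^ (a + b - k)) +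
        ∑ k ∈ Icc 1 b, (-1) ^ (b - k) * ((a + b - k - 1).choose (a - 1) : R) *
          (Y ^ k * D ^ (a + b - k)) := by
  rw [pow_mul_pow_eq_partialFractionSum h a b (Or.inl (by omega)), partialFractionSum,
    partialFractionSum]
  congr 1
  · congr 1
    refine sum_congr rfl fun k hk => ?_
    rw [Nat.choose_symm_of_eq_add (show a + b - k - 1 = a - k + (b - 1) by grind), mul_assoc]
  · rw [mul_sum]
    refine sum_congr rfl fun k hk => ?_
    have hkb : k ≤ b := (mem_Icc.mp hk).2
    rw [Nat.choose_symm_of_eq_add (show b + a - k - 1 = b - k + (a - 1) by omega),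
      show b + a - k = a + b - k by omega, neg_pow D, show a + b - k = a + (b - k) by omega]
    have hsign : (-1 : R) ^ a * (-1) ^ (a + (b - k)) = (-1) ^ (b - k) := by
      rw [← pow_add, ← add_assoc, ← two_mul, pow_add, pow_mul]
      simp
    linear_combination (↑((a + (b - k) - 1).choose (a - 1)) * Y ^ k * D ^ (a + (b - k))) * hsign

end PartialFraction

lemma inv_add_mul_inv_eq_inv_mul_sub {K : Type*} [Field K] {n d : K} (hn : n ≠ 0) (hd : d ≠ 0)
    (hnd : n + d ≠ 0) : (n + d)⁻¹ * n⁻¹ = d⁻¹ * (n⁻¹ - (n + d)⁻¹) := by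
  field_simp
  ring

def multiLiIndexEquivNat : ℕ ≃ {f : Fin 1 → ℕ // StrictAnti f ∧ ∀ i, 1 ≤ f i} where
  toFun n := ⟨![n + 1], Subsingleton.strictAnti _, fun i => by fin_cases i; simp⟩
  invFun f := f.1 0 - 1
  left_inv n := by simp
  right_inv f := by
    have := f.2.2 0
    ext i
    fin_cases i
    simp
    omega

/-- `(i, j) ↦ (n₁, n₂) = (i + j + 2, i + 1)`, so that `n₂ = i + 1` and `n₁ - n₂ = j + 1`. -/
def multiLiIndexEquivProd : ℕ × ℕ ≃ {f : Fin 2 → ℕ // StrictAnti f ∧ ∀ i, 1 ≤ f i} where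
  toFun p := ⟨![p.1 + p.2 + 2, p.1 + 1], by
    refine ⟨fun i j hij => ?_, fun i => by fin_cases i <;> simp⟩
    fin_cases i <;> fin_cases j <;> simp_all⟩
  invFun f := (f.1 1 - 1, f.1 0 - f.1 1 - 1)
  left_inv p := Prod.ext (by simp) (by simp; omega)
  right_inv f := by
    have h₁ := f.2.2 1
    have h₀₁ : f.1 1 < f.1 0 := f.2.1 (by decide)
    ext i
    fin_cases i <;> simp <;> omega

lemma multiLi_singleton_eq_tsum (s : ℕ) (z : ℂ) :
    multiLi [s] z = ∑' n : ℕ, z ^ (n + 1) * ((n + 1 : ℕ) : ℂ)⁻¹ ^ s := by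
  refine (multiLiIndexEquivNat.tsum_eq _).symm.trans (tsum_congr fun n => ?_)
  simp [multiLiIndexEquivNat, div_eq_mul_inv]

lemma multiLi_pair_eq_tsum (s t : ℕ) (z : ℂ) :
    multiLi [s, t] z = ∑' p : ℕ × ℕ,
      z ^ (p.1 + p.2 + 2) * (((p.1 + p.2 + 2 : ℕ) : ℂ)⁻¹ ^ s * ((p.1 + 1 : ℕ) : ℂ)⁻¹ ^ t) := by
  refine (multiLiIndexEquivProd.tsum_eq _).symm.trans (tsum_congr fun p => ?_)
  simp [multiLiIndexEquivProd, div_eq_mul_inv, Fin.prod_univ_two, mul_comm]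

lemma norm_natCast_inv_le_one (n : ℕ) : ‖(n : ℂ)⁻¹‖ ≤ 1 := by
  rw [norm_inv, Complex.norm_natCast]
  exact Nat.cast_inv_le_one n

lemma norm_natCast_inv_pow_le_one (n k : ℕ) : ‖(n : ℂ)⁻¹ ^ k‖ ≤ 1 := by
  rw [norm_pow]
  exact pow_le_one₀ (norm_nonneg _) (norm_natCast_inv_le_one n)

lemma norm_natCast_inv_pow_mul_le_one (m n k l : ℕ) : ‖(m : ℂ)⁻¹ ^ k * (n : ℂ)⁻¹ ^ l‖ ≤ 1 := by
  rw [norm_mul]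
  exact mul_le_one₀ (norm_natCast_inv_pow_le_one m k) (norm_nonneg _)
    (norm_natCast_inv_pow_le_one n l)

section Summability

variable {z : ℂ}

lemma summable_norm_pow_succ (hz : ‖z‖ < 1) : Summable fun n : ℕ => ‖z‖ ^ (n + 1) :=
  (summable_nat_add_iff 1).mpr (summable_geometric_of_lt_one (norm_nonneg z) hz)

lemma summable_norm_pow_succ_mul (hz : ‖z‖ < 1) {c : ℕ → ℂ} (hc : ∀ n, ‖c n‖ ≤ 1) :
    Summable fun n : ℕ => ‖z ^ (n + 1) * c n‖ :=
  (summable_norm_pow_succ hz).of_nonneg_of_le (fun _ => norm_nonneg _) fun n => by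
    rw [norm_mul, norm_pow]
    exact mul_le_of_le_one_right (by positivity) (hc n)

lemma summable_pow_add_mul (hz : ‖z‖ < 1) {c : ℕ × ℕ → ℂ} (hc : ∀ p, ‖c p‖ ≤ 1) :
    Summable fun p : ℕ × ℕ => z ^ (p.1 + p.2 + 2) * c p := by
  refine ((summable_norm_pow_succ hz).mul_of_nonneg (summable_norm_pow_succ hz)
    (fun _ => by positivity) fun _ => by positivity).of_norm_bounded fun p => ?_
  rw [norm_mul, norm_pow, ← pow_add, show p.1 + p.2 + 2 = p.1 + 1 + (p.2 + 1) by ring]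
  exact mul_le_of_le_one_right (by positivity) (hc p)

lemma hasSum_multiLi_pair (hz : ‖z‖ < 1) (s t : ℕ) :
    HasSum (fun p : ℕ × ℕ =>
      z ^ (p.1 + p.2 + 2) * (((p.1 + p.2 + 2 : ℕ) : ℂ)⁻¹ ^ s * ((p.1 + 1 : ℕ) : ℂ)⁻¹ ^ t))
      (multiLi [s, t] z) := by
  rw [multiLi_pair_eq_tsum]
  exact (summable_pow_add_mul hz fun _ => norm_natCast_inv_pow_mul_le_one _ _ _ _).hasSum

lemma hasSum_multiLi_pair_swap (hz : ‖z‖ < 1) (s t : ℕ) :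
    HasSum (fun p : ℕ × ℕ =>
      z ^ (p.1 + p.2 + 2) * (((p.1 + p.2 + 2 : ℕ) : ℂ)⁻¹ ^ s * ((p.2 + 1 : ℕ) : ℂ)⁻¹ ^ t))
      (multiLi [s, t] z) := by
  rw [← (Equiv.prodComm ℕ ℕ).hasSum_iff]
  exact (hasSum_multiLi_pair hz s t).congr_fun fun p => by simp [add_comm]

lemma hasSum_multiLi_singleton_mul (hz : ‖z‖ < 1) (s t : ℕ) :
    HasSum (fun p : ℕ × ℕ =>
      z ^ (p.1 + p.2 + 2) * (((p.1 + 1 : ℕ) : ℂ)⁻¹ ^ s * ((p.2 + 1 : ℕ) : ℂ)⁻¹ ^ t))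
      (multiLi [s] z * multiLi [t] z) := by
  have hs := summable_norm_pow_succ_mul hz fun n => norm_natCast_inv_pow_le_one (n + 1) s
  have ht := summable_norm_pow_succ_mul hz fun n => norm_natCast_inv_pow_le_one (n + 1) t
  rw [multiLi_singleton_eq_tsum, multiLi_singleton_eq_tsum, tsum_mul_tsum_of_summable_norm hs ht]
  exact (summable_mul_of_summable_norm hs ht).hasSum.congr_fun fun p => by ring

end Summability

theorem multiLi_partial_fraction (a b : ℕ) (ha : 1 ≤ a) (hb : 1 ≤ b)
    (z : ℂ) (hz : ‖z‖ < 1) :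
    multiLi [a, b] z =
      (-1 : ℂ) ^ b * ∑ k ∈ Finset.Icc 1 a,
          ((a + b - k - 1).choose (b - 1) : ℂ) * multiLi [k, a + b - k] z
      + ∑ k ∈ Finset.Icc 1 b,
          (-1 : ℂ) ^ (b - k) * ((a + b - k - 1).choose (a - 1) : ℂ) *
            multiLi [k] z * multiLi [a + b - k] z := by
  have hrel (p : ℕ × ℕ) :
      ((p.1 + p.2 + 2 : ℕ) : ℂ)⁻¹ * ((p.1 + 1 : ℕ) : ℂ)⁻¹ =
        ((p.2 + 1 : ℕ) : ℂ)⁻¹ * (((p.1 + 1 : ℕ) : ℂ)⁻¹ - ((p.1 + p.2 + 2 : ℕ) : ℂ)⁻¹) := by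
    have hsplit : ((p.1 + p.2 + 2 : ℕ) : ℂ) = ((p.1 + 1 : ℕ) : ℂ) + ((p.2 + 1 : ℕ) : ℂ) := by
      push_cast
      ring
    rw [hsplit]
    exact inv_add_mul_inv_eq_inv_mul_sub (Nat.cast_ne_zero.mpr p.1.succ_ne_zero)
      (Nat.cast_ne_zero.mpr p.2.succ_ne_zero)
      (by rw [← hsplit]; exact Nat.cast_ne_zero.mpr (by omega))
  have hsum := ((hasSum_sum (s := Icc 1 a) fun k _ =>
      (hasSum_multiLi_pair_swap hz k (a + b - k)).mul_left
        ((a + b - k - 1).choose (b - 1) : ℂ)).mul_left ((-1 : ℂ) ^ b)).add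
    (hasSum_sum (s := Icc 1 b) fun k _ => (hasSum_multiLi_singleton_mul hz k (a + b - k)).mul_left
      ((-1 : ℂ) ^ (b - k) * ((a + b - k - 1).choose (a - 1) : ℂ)))
  simp only [mul_assoc _ (multiLi _ z)]
  refine (hasSum_multiLi_pair hz a b).unique (hsum.congr_fun fun p => ?_)
  rw [pow_mul_pow_eq_sum (hrel p) ha hb]
  simp only [mul_add, mul_sum]
  congr 1 <;> exact sum_congr rfl fun k _ => by ring
end

section
/- For every positive integer n and every complex z with |z| < 1: 2 * Li_{1, 2n-1}(z) = sum_{k=1}^{2n-1} (-1)^{k+1} * Li_k(z) * Li_{2n-k}(z). -/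
open scoped BigOperators

/-!
For `x, y ≥ 1` and odd `q`, the telescoping partial-fraction identity
`∑_{k=1}^{q} (-1)^(k+1) / (x^k y^(q+1-k)) = (x^(-q) + y^(-q)) / (x + y)` holds.
Multiplying by `z^(x+y)` and summing over all `x, y ≥ 1` (absolutely convergent for `‖z‖ < 1`),
the left side becomes `∑_k (-1)^(k+1) Li_k(z) Li_{q+1-k}(z)`, while the right side, symmetrised
under `x ↔ y`, becomes twice `Li_{1,q}(z)` with `n₁ = x + y`, `n₂ = y`.
-/

open Finset

theorem add_mul_sum_Icc_alternating {R : Type*} [CommRing R] (a b : R) (q : ℕ) :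
    (a + b) * ∑ k ∈ Icc 1 q, (-1) ^ (k + 1) * a ^ k * b ^ (q + 1 - k) =
      a * b * (b ^ q - (-a) ^ q) := by
  induction q with
  | zero => simp
  | succ q ih =>
    have hpow : ∀ k ∈ Icc 1 q, (-1 : R) ^ (k + 1) * a ^ k * b ^ (q + 1 + 1 - k) =
        b * ((-1) ^ (k + 1) * a ^ k * b ^ (q + 1 - k)) := fun k hk => by
      rw [show q + 1 + 1 - k = q + 1 - k + 1 by grind]
      ring
    rw [sum_Icc_succ_top (by omega), sum_congr rfl hpow, ← mul_sum, mul_add, mul_left_comm, ih,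
      Nat.add_sub_cancel_left]
    ring

theorem norm_div_le_of_one_le_norm {K : Type*} [NormedDivisionRing K] (w : K) {D : K}
    (hD : 1 ≤ ‖D‖) : ‖w / D‖ ≤ ‖w‖ := by
  rw [norm_div]
  exact div_le_self (norm_nonneg w) hD

theorem Complex.one_le_norm_pow_of_one_le_re {x : ℂ} (hx : 1 ≤ x.re) (k : ℕ) : 1 ≤ ‖x ^ k‖ := by
  rw [norm_pow]
  exact one_le_pow₀ (hx.trans (Complex.re_le_norm x))

namespace MultiLi

/- The summation indices are shifted to start at `0`, so that no term has a `0 ^ 0` in the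
denominator and no positivity side conditions are needed. -/

noncomputable def term (k : ℕ) (z : ℂ) (m : ℕ) : ℂ := z ^ (m + 1) / (m + 1 : ℂ) ^ k

noncomputable def term₂ (a b : ℕ) (z : ℂ) (m p : ℕ) : ℂ :=
  z ^ (m + p + 2) / ((m + p + 2 : ℂ) ^ a * (p + 1 : ℂ) ^ b)

def natEquivIndex : ℕ ≃ {f : Fin 1 → ℕ // StrictAnti f ∧ ∀ i, 1 ≤ f i} where
  toFun m := ⟨fun _ => m + 1, Subsingleton.strictAnti _, fun _ => Nat.le_add_left 1 m⟩
  invFun f := f.1 0 - 1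
  left_inv m := by simp
  right_inv f := Subtype.ext <| funext fun i => by
    have := f.2.2 i
    simp only [Subsingleton.elim i 0] at this ⊢
    omega

/-- `(m, p)` encodes the index pair `n₁ = m + p + 2 > n₂ = p + 1 ≥ 1`. -/
def prodEquivIndex : ℕ × ℕ ≃ {f : Fin 2 → ℕ // StrictAnti f ∧ ∀ i, 1 ≤ f i} where
  toFun mp := ⟨![mp.1 + mp.2 + 2, mp.2 + 1], by
    refine ⟨fun i j hij => ?_, fun i => ?_⟩
    · fin_cases i <;> fin_cases j <;> simp_all
    · fin_cases i <;> simp⟩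
  invFun f := (f.1 0 - f.1 1 - 1, f.1 1 - 1)
  left_inv mp := by ext <;> simp; omega
  right_inv f := by
    have h10 : f.1 1 < f.1 0 := f.2.1 (by decide)
    have h1 := f.2.2 1
    refine Subtype.ext (funext fun i => ?_)
    fin_cases i <;> simp <;> omega

theorem multiLi_singleton (k : ℕ) (z : ℂ) : multiLi [k] z = ∑' m, term k z m := by
  refine (natEquivIndex.tsum_eq _).symm.trans (tsum_congr fun m => ?_)
  simp [natEquivIndex, term]

theorem multiLi_pair (a b : ℕ) (z : ℂ) :
    multiLi [a, b] z = ∑' mp : ℕ × ℕ, term₂ a b z mp.1 mp.2 := by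
  refine (prodEquivIndex.tsum_eq _).symm.trans (tsum_congr fun mp => ?_)
  simp [prodEquivIndex, term₂, Fin.prod_univ_two]

theorem norm_term_le (k : ℕ) (z : ℂ) (m : ℕ) : ‖term k z m‖ ≤ ‖z‖ ^ (m + 1) :=
  (norm_div_le_of_one_le_norm _ (Complex.one_le_norm_pow_of_one_le_re (by simp) k)).trans_eq
    (norm_pow z _)

theorem norm_term₂_le (a b : ℕ) (z : ℂ) (m p : ℕ) :
    ‖term₂ a b z m p‖ ≤ ‖z‖ ^ (m + 1) * ‖z‖ ^ (p + 1) := by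
  have hD : 1 ≤ ‖(m + p + 2 : ℂ) ^ a * (p + 1 : ℂ) ^ b‖ := by
    rw [norm_mul]
    exact one_le_mul_of_one_le_of_one_le
      (Complex.one_le_norm_pow_of_one_le_re (by simp; linarith) a)
      (Complex.one_le_norm_pow_of_one_le_re (by simp) b)
  calc ‖term₂ a b z m p‖ ≤ ‖z ^ (m + p + 2)‖ := norm_div_le_of_one_le_norm _ hD
    _ = ‖z‖ ^ (m + 1) * ‖z‖ ^ (p + 1) := by rw [norm_pow, ← pow_add]; ring_nf

theorem summable_norm_pow_succ {z : ℂ} (hz : ‖z‖ < 1) : Summable fun m : ℕ => ‖z‖ ^ (m + 1) :=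
  (summable_nat_add_iff 1).2 (summable_geometric_of_lt_one (norm_nonneg z) hz)

theorem summable_norm_term (k : ℕ) {z : ℂ} (hz : ‖z‖ < 1) : Summable fun m => ‖term k z m‖ :=
  .of_nonneg_of_le (fun _ => norm_nonneg _) (norm_term_le k z) (summable_norm_pow_succ hz)

theorem summable_term₂ (a b : ℕ) {z : ℂ} (hz : ‖z‖ < 1) :
    Summable fun mp : ℕ × ℕ => term₂ a b z mp.1 mp.2 :=
  .of_norm_bounded ((summable_norm_pow_succ hz).mul_of_nonneg (summable_norm_pow_succ hz)
    (fun _ => by positivity) (fun _ => by positivity)) fun mp => norm_term₂_le a b z mp.1 mp.2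

theorem multiLi_singleton_mul_multiLi_singleton (k j : ℕ) {z : ℂ} (hz : ‖z‖ < 1) :
    multiLi [k] z * multiLi [j] z = ∑' mp : ℕ × ℕ, term k z mp.1 * term j z mp.2 := by
  rw [multiLi_singleton, multiLi_singleton,
    tsum_mul_tsum_of_summable_norm (summable_norm_term k hz) (summable_norm_term j hz)]

theorem sum_alternating_term_mul_term {q : ℕ} (hq : Odd q) (z : ℂ) (m p : ℕ) :
    ∑ k ∈ Icc 1 q, (-1) ^ (k + 1) * (term k z m * term (q + 1 - k) z p) =
      term₂ 1 q z m p + term₂ 1 q z p m := by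
  have hx : (m + 1 : ℂ) ≠ 0 := Nat.cast_add_one_ne_zero m
  have hy : (p + 1 : ℂ) ≠ 0 := Nat.cast_add_one_ne_zero p
  have hs : (m + p + 2 : ℂ) ≠ 0 := by exact_mod_cast Nat.succ_ne_zero (m + p + 1)
  have hxy : (m + 1 : ℂ)⁻¹ + (p + 1 : ℂ)⁻¹ = (m + p + 2) / ((m + 1) * (p + 1)) := by
    field_simp
    ring
  have key := add_mul_sum_Icc_alternating (m + 1 : ℂ)⁻¹ (p + 1 : ℂ)⁻¹ q
  rw [hq.neg_pow, sub_neg_eq_add] at key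
  have hterm : ∀ k ∈ Icc 1 q, (-1) ^ (k + 1) * (term k z m * term (q + 1 - k) z p) =
      z ^ (m + p + 2) * ((-1) ^ (k + 1) * (m + 1 : ℂ)⁻¹ ^ k * (p + 1 : ℂ)⁻¹ ^ (q + 1 - k)) := by
    intro k _
    simp only [term, div_eq_mul_inv, inv_pow]
    ring
  rw [sum_congr rfl hterm, ← mul_sum,
    eq_div_of_mul_eq (hxy ▸ div_ne_zero hs (mul_ne_zero hx hy)) ((mul_comm _ _).trans key), hxy]
  simp only [term₂, inv_pow, add_comm p m, add_comm (p : ℂ) m]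
  field_simp

end MultiLi

open MultiLi in
theorem two_mul_multiLi_one_of_odd {q : ℕ} (hq : Odd q) {z : ℂ} (hz : ‖z‖ < 1) :
    2 * multiLi [1, q] z =
      ∑ k ∈ Icc 1 q, (-1 : ℂ) ^ (k + 1) * multiLi [k] z * multiLi [q + 1 - k] z := by
  have hsum := summable_term₂ 1 q hz
  have hsum_swap : Summable fun mp : ℕ × ℕ => term₂ 1 q z mp.2 mp.1 :=
    (Equiv.prodComm ℕ ℕ).summable_iff.2 hsum
  have hswap : ∑' mp : ℕ × ℕ, term₂ 1 q z mp.1 mp.2 = ∑' mp : ℕ × ℕ, term₂ 1 q z mp.2 mp.1 :=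
    ((Equiv.prodComm ℕ ℕ).tsum_eq _).symm
  calc 2 * multiLi [1, q] z
      = ∑' mp : ℕ × ℕ, (term₂ 1 q z mp.1 mp.2 + term₂ 1 q z mp.2 mp.1) := by
        rw [hsum.tsum_add hsum_swap, ← hswap, multiLi_pair, two_mul]
    _ = ∑' mp : ℕ × ℕ, ∑ k ∈ Icc 1 q,
          (-1) ^ (k + 1) * (term k z mp.1 * term (q + 1 - k) z mp.2) := by
        simp only [sum_alternating_term_mul_term hq]
    _ = _ := by
        rw [Summable.tsum_finsetSum fun k _ => (summable_mul_of_summable_norm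
          (summable_norm_term k hz) (summable_norm_term _ hz)).mul_left _]
        simp only [tsum_mul_left, mul_assoc, multiLi_singleton_mul_multiLi_singleton _ _ hz]

theorem two_mul_multiLi_one_odd (n : ℕ) (hn : 1 ≤ n) (z : ℂ) (hz : ‖z‖ < 1) :
    2 * multiLi [1, 2 * n - 1] z =
      ∑ k ∈ Finset.Icc 1 (2 * n - 1),
        (-1 : ℂ) ^ (k + 1) * multiLi [k] z * multiLi [2 * n - k] z := by
  rw [two_mul_multiLi_one_of_odd ⟨n - 1, by omega⟩ hz]
  refine sum_congr rfl fun k _ => ?_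
  rw [show 2 * n - 1 + 1 - k = 2 * n - k by omega]
end

section
/- For every complex z with |z| < 1: 2 * Li_{2,1}(z) + Li_{1,2}(z) = Li_1(z) * Li_2(z). -/
open scoped BigOperators

/-!
Write the indices of `Li_{a,b}` as `n₁ = i + j > n₂ = j` with `i, j ≥ 1`. The partial fraction
decomposition `1/(i j²) = 1/((i+j) j²) + 1/((i+j)² j) + 1/((i+j)² i)` turns the Cauchy product
`Li_1(z) Li_2(z) = ∑_{i,j ≥ 1} z^{i+j}/(i j²)` into `Li_{1,2}(z) + Li_{2,1}(z) + Li_{2,1}(z)`,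
the last copy of `Li_{2,1}` appearing with the roles of `i` and `j` exchanged. Absolute
convergence for `‖z‖ < 1` justifies the rearrangements.
-/

lemma one_div_mul_sq_eq {K : Type*} [Field K] {x y : K} (hx : x ≠ 0) (hy : y ≠ 0)
    (hxy : x + y ≠ 0) :
    1 / (x * y ^ 2) = 1 / ((x + y) * y ^ 2) + 1 / ((x + y) ^ 2 * y) + 1 / ((x + y) ^ 2 * x) := by
  field_simp
  ring

namespace multiLi

def indexEquivOne : ℕ ≃ {f : Fin 1 → ℕ // StrictAnti f ∧ ∀ i, 1 ≤ f i} where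
  toFun n := ⟨![n + 1], Subsingleton.strictAnti _, fun i => by fin_cases i; simp⟩
  invFun f := f.1 0 - 1
  left_inv n := by simp
  right_inv := fun ⟨f, _, hpos⟩ => by
    have := hpos 0
    ext i
    fin_cases i
    simp
    omega

def indexEquivTwo : ℕ × ℕ ≃ {f : Fin 2 → ℕ // StrictAnti f ∧ ∀ i, 1 ≤ f i} where
  toFun p := ⟨![p.1 + 1 + (p.2 + 1), p.2 + 1], by
    refine ⟨fun i j hij => ?_, fun i => by fin_cases i <;> simp; omega⟩
    fin_cases i <;> fin_cases j <;> simp_all⟩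
  invFun f := (f.1 0 - f.1 1 - 1, f.1 1 - 1)
  left_inv p := by ext <;> simp
  right_inv := fun ⟨f, hanti, hpos⟩ => by
    have h01 : f 1 < f 0 := hanti (by decide : (0 : Fin 2) < 1)
    have := hpos 1
    ext i
    fin_cases i <;> simp <;> omega

/-- The term `z^{n₁}/(n₁^a n₂^b)` of `Li_{a,b}(z)` at `(n₁, n₂) = (i + j, j)`. -/
noncomputable def pairTerm (a b : ℕ) (z : ℂ) (i j : ℕ) : ℂ :=
  z ^ (i + j) / (((i : ℂ) + j) ^ a * (j : ℂ) ^ b)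

lemma singleton_eq_tsum (s : ℕ) (z : ℂ) :
    multiLi [s] z = ∑' n : ℕ, z ^ (n + 1) / ((n : ℂ) + 1) ^ s := by
  rw [multiLi]
  simp only [List.length_cons, List.length_nil, Nat.reduceAdd]
  rw [← indexEquivOne.tsum_eq]
  simp [indexEquivOne]

lemma pair_eq_tsum (a b : ℕ) (z : ℂ) :
    multiLi [a, b] z = ∑' p : ℕ × ℕ, pairTerm a b z (p.1 + 1) (p.2 + 1) := by
  rw [multiLi]
  simp only [List.length_cons, List.length_nil, Nat.reduceAdd]
  rw [← indexEquivTwo.tsum_eq]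
  simp [indexEquivTwo, pairTerm, Fin.prod_univ_two]

lemma pair_eq_tsum_swap (a b : ℕ) (z : ℂ) :
    multiLi [a, b] z = ∑' p : ℕ × ℕ, pairTerm a b z (p.2 + 1) (p.1 + 1) := by
  rw [pair_eq_tsum, ← (Equiv.prodComm ℕ ℕ).tsum_eq]
  rfl

variable {z : ℂ}

lemma norm_pairTerm_le (a b : ℕ) {i j : ℕ} (hi : 1 ≤ i) (hj : 1 ≤ j) :
    ‖pairTerm a b z i j‖ ≤ ‖z‖ ^ i * ‖z‖ ^ j := by
  have hij : (1 : ℝ) ≤ ‖(i : ℂ) + j‖ := by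
    rw [← Nat.cast_add, Complex.norm_natCast]
    exact_mod_cast le_add_right hi
  have hj' : (1 : ℝ) ≤ ‖(j : ℂ)‖ := by
    rw [Complex.norm_natCast]
    exact_mod_cast hj
  rw [pairTerm, norm_div, norm_mul, norm_pow, norm_pow, norm_pow, pow_add]
  exact div_le_self (by positivity) (one_le_mul_of_one_le_of_one_le
    (one_le_pow₀ hij) (one_le_pow₀ hj'))

lemma summable_norm_pow_succ (hz : ‖z‖ < 1) : Summable fun n : ℕ => ‖z‖ ^ (n + 1) :=
  (summable_geometric_of_lt_one (norm_nonneg z) hz).comp_injective (add_left_injective 1)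

lemma summable_norm_pow_succ_div (s : ℕ) (hz : ‖z‖ < 1) :
    Summable fun n : ℕ => ‖z ^ (n + 1) / ((n : ℂ) + 1) ^ s‖ := by
  refine (summable_norm_pow_succ hz).of_nonneg_of_le (fun n => norm_nonneg _) fun n => ?_
  have hn : (1 : ℝ) ≤ ‖(n : ℂ) + 1‖ := by
    rw [← Nat.cast_succ, Complex.norm_natCast]
    exact_mod_cast n.succ_pos
  rw [norm_div, norm_pow, norm_pow]
  exact div_le_self (by positivity) (one_le_pow₀ hn)

lemma summable_pairTerm (a b : ℕ) (hz : ‖z‖ < 1) :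
    Summable fun p : ℕ × ℕ => pairTerm a b z (p.1 + 1) (p.2 + 1) :=
  .of_norm_bounded ((summable_norm_pow_succ hz).mul_of_nonneg (summable_norm_pow_succ hz)
    (fun _ => by positivity) fun _ => by positivity)
    fun p => norm_pairTerm_le a b p.1.succ_pos p.2.succ_pos

lemma summable_pairTerm_swap (a b : ℕ) (hz : ‖z‖ < 1) :
    Summable fun p : ℕ × ℕ => pairTerm a b z (p.2 + 1) (p.1 + 1) :=
  (Equiv.prodComm ℕ ℕ).summable_iff.mpr (summable_pairTerm a b hz)

lemma mul_eq_pairTerm_add (z : ℂ) {i j : ℕ} (hi : i ≠ 0) (hj : j ≠ 0) :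
    z ^ i / (i : ℂ) * (z ^ j / (j : ℂ) ^ 2) =
      pairTerm 1 2 z i j + pairTerm 2 1 z i j + pairTerm 2 1 z j i := by
  have hij : (i : ℂ) + j ≠ 0 := by exact_mod_cast (Nat.add_pos_left (Nat.pos_of_ne_zero hi) j).ne'
  simp only [pairTerm, add_comm j i, add_comm (j : ℂ), pow_one]
  calc z ^ i / (i : ℂ) * (z ^ j / (j : ℂ) ^ 2) = z ^ (i + j) * (1 / (i * j ^ 2)) := by ring
    _ = _ := by
      rw [one_div_mul_sq_eq (Nat.cast_ne_zero.mpr hi) (Nat.cast_ne_zero.mpr hj) hij]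
      ring

end multiLi

open multiLi in
theorem multiLi_weight_three (z : ℂ) (hz : ‖z‖ < 1) :
    2 * multiLi [2, 1] z + multiLi [1, 2] z = multiLi [1] z * multiLi [2] z := by
  have hprod (p : ℕ × ℕ) :
      z ^ (p.1 + 1) / ((p.1 : ℂ) + 1) ^ 1 * (z ^ (p.2 + 1) / ((p.2 : ℂ) + 1) ^ 2) =
        pairTerm 1 2 z (p.1 + 1) (p.2 + 1) + pairTerm 2 1 z (p.1 + 1) (p.2 + 1) +
          pairTerm 2 1 z (p.2 + 1) (p.1 + 1) := by
    simpa using mul_eq_pairTerm_add z p.1.succ_ne_zero p.2.succ_ne_zero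
  rw [singleton_eq_tsum, singleton_eq_tsum, tsum_mul_tsum_of_summable_norm
    (summable_norm_pow_succ_div 1 hz) (summable_norm_pow_succ_div 2 hz), tsum_congr hprod,
    ((summable_pairTerm 1 2 hz).add (summable_pairTerm 2 1 hz)).tsum_add
      (summable_pairTerm_swap 2 1 hz),
    (summable_pairTerm 1 2 hz).tsum_add (summable_pairTerm 2 1 hz),
    ← pair_eq_tsum, ← pair_eq_tsum, ← pair_eq_tsum_swap]
  ring
end

section
/- For every complex z with |z| < 1: 4 * Li_{3,1}(z) + 2 * Li_{2,2}(z) = Li_2(z)^2. -/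
open scoped BigOperators

/-!
Writing `Li_{a,b}(z) = ∑_N z^N/N^a · H_N^{(b)}` with `H_N^{(b)} = ∑_{1 ≤ m < N} 1/m^b`, both
sides are power series in `z`, absolutely convergent for `‖z‖ < 1`. By the Cauchy product the
coefficient of `z^N` in `Li_2(z)^2` is `∑_{k+m=N, k,m ≥ 1} 1/(k²m²)`, and the partial fraction
decomposition `1/(k²m²) = (1/k² + 1/m²)/N² + 2(1/k + 1/m)/N³` together with the symmetry `k ↔ m`
turns this into `2 H_N^{(2)}/N² + 4 H_N^{(1)}/N³`, the coefficient of `z^N` on the left-hand side.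
-/

open Finset

noncomputable def partialZeta (b n : ℕ) : ℂ := ∑ m ∈ Ico 1 n, 1 / (m : ℂ) ^ b

lemma sum_Ico_one_div_sub_pow_eq_partialZeta (b N : ℕ) :
    ∑ k ∈ Ico 1 N, 1 / ((N - k : ℕ) : ℂ) ^ b = partialZeta b N := by
  rcases N.eq_zero_or_pos with rfl | hN
  · simp [partialZeta]
  rw [sum_Ico_reflect (fun j => 1 / (j : ℂ) ^ b) 1 (by omega), partialZeta,
    Nat.add_sub_cancel, Nat.add_sub_cancel_left]

lemma one_div_sq_mul_sq {K : Type*} [Field K] {k m : K} (hk : k ≠ 0) (hm : m ≠ 0)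
    (hkm : k + m ≠ 0) :
    1 / (k ^ 2 * m ^ 2) =
      (1 / k ^ 2 + 1 / m ^ 2) / (k + m) ^ 2 + 2 * (1 / k + 1 / m) / (k + m) ^ 3 := by
  field_simp
  ring

lemma sum_antidiagonal_one_div_sq_mul_sq (N : ℕ) :
    ∑ p ∈ antidiagonal N, 1 / ((p.1 : ℂ) ^ 2 * (p.2 : ℂ) ^ 2) =
      2 * partialZeta 2 N / N ^ 2 + 4 * partialZeta 1 N / N ^ 3 := by
  rcases N.eq_zero_or_pos with rfl | hN
  · simp [partialZeta]
  -- the terms `k = 0` and `k = N` vanish because `1 / 0 = 0`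
  have interior : ∑ p ∈ antidiagonal N, 1 / ((p.1 : ℂ) ^ 2 * (p.2 : ℂ) ^ 2) =
      ∑ k ∈ Ico 1 N, 1 / ((k : ℂ) ^ 2 * ((N - k : ℕ) : ℂ) ^ 2) := by
    rw [Nat.sum_antidiagonal_eq_sum_range_succ_mk, sum_range_succ, range_eq_Ico,
      sum_eq_sum_Ico_succ_bot hN]
    simp
  have split : ∀ k ∈ Ico 1 N, 1 / ((k : ℂ) ^ 2 * ((N - k : ℕ) : ℂ) ^ 2) =
      (1 / (k : ℂ) ^ 2 + 1 / ((N - k : ℕ) : ℂ) ^ 2) / (N : ℂ) ^ 2 +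
        2 * (1 / (k : ℂ) ^ 1 + 1 / ((N - k : ℕ) : ℂ) ^ 1) / (N : ℂ) ^ 3 := by
    intro k hk
    rw [mem_Ico] at hk
    have hsum : (k : ℂ) + ((N - k : ℕ) : ℂ) = N := by
      rw [← Nat.cast_add, Nat.add_sub_cancel' hk.2.le]
    rw [pow_one, pow_one, one_div_sq_mul_sq (by norm_cast; omega) (by norm_cast; omega)
      (by rw [hsum]; norm_cast; omega), hsum]
  rw [interior, sum_congr rfl split]
  simp only [sum_add_distrib, ← sum_div, ← mul_sum, sum_Ico_one_div_sub_pow_eq_partialZeta]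
  rw [partialZeta, partialZeta]
  ring

lemma sum_antidiagonal_pow_div_sq_mul (z : ℂ) (N : ℕ) :
    ∑ p ∈ antidiagonal N, z ^ p.1 / (p.1 : ℂ) ^ 2 * (z ^ p.2 / (p.2 : ℂ) ^ 2) =
      4 * (z ^ N / (N : ℂ) ^ 3 * partialZeta 1 N) +
        2 * (z ^ N / (N : ℂ) ^ 2 * partialZeta 2 N) := by
  have factor : ∀ p ∈ antidiagonal N, z ^ p.1 / (p.1 : ℂ) ^ 2 * (z ^ p.2 / (p.2 : ℂ) ^ 2) =
      z ^ N * (1 / ((p.1 : ℂ) ^ 2 * (p.2 : ℂ) ^ 2)) := by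
    intro p hp
    rw [← mem_antidiagonal.1 hp, pow_add]
    ring
  rw [sum_congr rfl factor, ← mul_sum, sum_antidiagonal_one_div_sq_mul_sq]
  ring

lemma norm_pow_div_natCast_le (z : ℂ) (n k : ℕ) : ‖z ^ n / (k : ℂ)‖ ≤ ‖z‖ ^ n := by
  rw [div_eq_mul_inv, norm_mul, norm_pow, norm_inv, Complex.norm_natCast]
  exact mul_le_of_le_one_right (by positivity) (Nat.cast_inv_le_one k)

section

variable {z : ℂ}

lemma summable_norm_pow_div_natCast_pow (hz : ‖z‖ < 1) (a : ℕ) :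
    Summable fun n : ℕ => ‖z ^ n / (n : ℂ) ^ a‖ :=
  (summable_geometric_of_lt_one (norm_nonneg z) hz).of_nonneg_of_le (fun _ => norm_nonneg _)
    fun n => by simpa using norm_pow_div_natCast_le z n (n ^ a)

def strictAntiFinOneEquiv :
    {n : ℕ | 1 ≤ n} ≃ {f : Fin 1 → ℕ // StrictAnti f ∧ ∀ i, 1 ≤ f i} where
  toFun n := ⟨fun _ => n.1, Subsingleton.strictAnti _, fun _ => n.2⟩
  invFun f := ⟨f.1 0, f.2.2 0⟩
  left_inv _ := rfl
  right_inv f := by ext i; fin_cases i; rfl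

lemma hasSum_multiLi_singleton {a : ℕ} (ha : a ≠ 0) (hz : ‖z‖ < 1) :
    HasSum (fun n : ℕ => z ^ n / (n : ℂ) ^ a) (multiLi [a] z) := by
  have hLi : multiLi [a] z = ∑' n : {n : ℕ | 1 ≤ n}, z ^ n.1 / (n.1 : ℂ) ^ a := by
    refine (strictAntiFinOneEquiv.tsum_eq _).symm.trans (tsum_congr fun n => ?_)
    simp [strictAntiFinOneEquiv]
  have hind : Set.indicator {n : ℕ | 1 ≤ n} (fun n : ℕ => z ^ n / (n : ℂ) ^ a) =
      fun n : ℕ => z ^ n / (n : ℂ) ^ a := by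
    ext (_ | n)
    · simp [ha]
    · simp
  rw [hLi, _root_.tsum_subtype {n : ℕ | 1 ≤ n} (fun n : ℕ => z ^ n / (n : ℂ) ^ a), hind]
  exact (summable_norm_pow_div_natCast_pow hz a).of_norm.hasSum

def depthTwoIndex : Set (ℕ × ℕ) := {p | p.2 < p.1 ∧ 1 ≤ p.2}

def strictAntiFinTwoEquiv :
    depthTwoIndex ≃ {f : Fin 2 → ℕ // StrictAnti f ∧ ∀ i, 1 ≤ f i} where
  toFun p := ⟨![p.1.1, p.1.2], Fin.strictAnti_iff_succ_lt.2 fun i => by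
      fin_cases i; exact p.2.1,
    fun i => by fin_cases i; exacts [p.2.2.trans p.2.1.le, p.2.2]⟩
  invFun f := ⟨(f.1 0, f.1 1), f.2.1 (by decide), f.2.2 1⟩
  left_inv _ := rfl
  right_inv f := by ext i; fin_cases i <;> rfl

noncomputable def multiLiPairTerm (a b : ℕ) (z : ℂ) : ℕ × ℕ → ℂ :=
  Set.indicator depthTwoIndex fun p => z ^ p.1 / ((p.1 : ℂ) ^ a * (p.2 : ℂ) ^ b)

lemma multiLi_pair_eq_tsum_s4 (a b : ℕ) (z : ℂ) :
    multiLi [a, b] z = ∑' p, multiLiPairTerm a b z p := by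
  rw [multiLiPairTerm, ← _root_.tsum_subtype]
  refine (strictAntiFinTwoEquiv.tsum_eq _).symm.trans (tsum_congr fun p => ?_)
  rw [dif_pos (by simp)]
  exact congrArg _ (Fin.prod_univ_two _)

lemma summable_multiLiPairTerm (a b : ℕ) (hz : ‖z‖ < 1) : Summable (multiLiPairTerm a b z) := by
  set ρ := √‖z‖
  have hρ0 : 0 ≤ ρ := Real.sqrt_nonneg _
  have hρ1 : ρ < 1 := (Real.sqrt_lt' one_pos).2 (by rwa [one_pow])
  have hgeom : Summable fun p : ℕ × ℕ => ρ ^ p.1 * ρ ^ p.2 :=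
    (summable_geometric_of_lt_one hρ0 hρ1).mul_of_nonneg (summable_geometric_of_lt_one hρ0 hρ1)
      (fun _ => by positivity) (fun _ => by positivity)
  refine hgeom.of_norm_bounded fun p => ?_
  by_cases hp : p ∈ depthTwoIndex
  · rw [multiLiPairTerm, Set.indicator_of_mem hp]
    calc ‖z ^ p.1 / ((p.1 : ℂ) ^ a * (p.2 : ℂ) ^ b)‖ ≤ ‖z‖ ^ p.1 := by
          exact_mod_cast norm_pow_div_natCast_le z p.1 (p.1 ^ a * p.2 ^ b)
      _ = ρ ^ p.1 * ρ ^ p.1 := by rw [← mul_pow, Real.mul_self_sqrt (norm_nonneg z)]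
      _ ≤ ρ ^ p.1 * ρ ^ p.2 := by gcongr ?_ * ?_; exact pow_le_pow_of_le_one hρ0 hρ1.le hp.1.le
  · rw [multiLiPairTerm, Set.indicator_of_notMem hp, norm_zero]
    positivity

lemma hasSum_multiLiPairTerm_row (a b : ℕ) (z : ℂ) (n : ℕ) :
    HasSum (fun m => multiLiPairTerm a b z (n, m)) (z ^ n / (n : ℂ) ^ a * partialZeta b n) := by
  have hsupp : ∀ m ∉ Ico 1 n, multiLiPairTerm a b z (n, m) = 0 := fun m hm =>
    Set.indicator_of_notMem (fun h => hm (mem_Ico.2 ⟨h.2, h.1⟩)) _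
  have hrow :
      ∑ m ∈ Ico 1 n, multiLiPairTerm a b z (n, m) = z ^ n / (n : ℂ) ^ a * partialZeta b n := by
    rw [partialZeta, mul_sum]
    refine sum_congr rfl fun m hm => ?_
    rw [mem_Ico] at hm
    rw [multiLiPairTerm, Set.indicator_of_mem (show (n, m) ∈ depthTwoIndex from ⟨hm.2, hm.1⟩),
      div_mul_div_comm, mul_one]
  exact hrow ▸ hasSum_sum_of_ne_finset_zero hsupp

lemma hasSum_multiLi_pair_s4 (a b : ℕ) (hz : ‖z‖ < 1) :
    HasSum (fun n : ℕ => z ^ n / (n : ℂ) ^ a * partialZeta b n) (multiLi [a, b] z) := by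
  rw [multiLi_pair_eq_tsum_s4]
  exact (summable_multiLiPairTerm a b hz).hasSum.prod_fiberwise (hasSum_multiLiPairTerm_row a b z)

end

theorem multiLi_weight_four (z : ℂ) (hz : ‖z‖ < 1) :
    4 * multiLi [3, 1] z + 2 * multiLi [2, 2] z = multiLi [2] z ^ 2 := by
  have hLi2 := (hasSum_multiLi_singleton two_ne_zero hz).tsum_eq
  have hLHS := ((hasSum_multiLi_pair_s4 3 1 hz).mul_left 4).add
    ((hasSum_multiLi_pair_s4 2 2 hz).mul_left 2)
  rw [← hLHS.tsum_eq, ← hLi2, sq, tsum_mul_tsum_eq_tsum_sum_antidiagonal_of_summable_norm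
    (summable_norm_pow_div_natCast_pow hz 2) (summable_norm_pow_div_natCast_pow hz 2)]
  exact tsum_congr fun N => (sum_antidiagonal_pow_div_sq_mul z N).symm
end

section
/- For every positive integer q: sum_{p=0}^{q} (1 - 2^{1-2p}) * (1 - 2^{1-(2q-2p)}) * B_{2p} * B_{2q-2p} / ((2p)! * (2q-2p)!) = -(2q-1) * B_{2q} / (2q)!, where B_k are the Bernoulli numbers. -/
/-!
With `A = X / (exp X - 1)` the exponential generating function of the Bernoulli numbers, the series
`F = A - 2 A(X/2)` has coefficients `(1 - 2^{1-n}) B_n / n!` and equals `-X e^{X/2} / (e^X - 1)`.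
Hence `F² = X² e^X / (e^X - 1)² = A - X A'`, whose `n`-th coefficient is `(1 - n) B_n / n!`.
Comparing coefficients of `X^{2q}`, the odd-index terms of the Cauchy product vanish.
-/

open PowerSeries Finset

theorem Finset.sum_range_two_mul_add_one_eq_sum_even {M : Type*} [AddCommMonoid M] (f : ℕ → M)
    (hf : ∀ k, Odd k → f k = 0) (q : ℕ) :
    ∑ k ∈ range (2 * q + 1), f k = ∑ p ∈ range (q + 1), f (2 * p) := by
  induction q with
  | zero => simp
  | succ q ih =>
    rw [show 2 * (q + 1) + 1 = 2 * q + 1 + 1 + 1 by ring, sum_range_succ, sum_range_succ, ih,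
      hf _ (odd_two_mul_add_one q), add_zero, sum_range_succ (fun p => f (2 * p)) (q + 1)]
    rfl

namespace PowerSeries

theorem coeff_sub_X_mul_derivative {R : Type*} [CommRing R] (f : R⟦X⟧) (n : ℕ) :
    coeff n (f - X * d⁄dX R f) = (1 - n) * coeff n f := by
  cases n with
  | zero => simp
  | succ m =>
    rw [map_sub, coeff_succ_X_mul, coeff_derivative]
    push_cast
    ring

theorem coeff_bernoulliPowerSeries_rat (n : ℕ) :
    coeff n (bernoulliPowerSeries ℚ) = bernoulli n / n.factorial := by
  simp [bernoulliPowerSeries]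

theorem bernoulliPowerSeries_sub_X_mul_derivative_mul_sq :
    (bernoulliPowerSeries ℚ - X * d⁄dX ℚ (bernoulliPowerSeries ℚ)) * (exp ℚ - 1) ^ 2 =
      X ^ 2 * exp ℚ := by
  set A := bernoulliPowerSeries ℚ
  have hA : A * (exp ℚ - 1) = X := bernoulliPowerSeries_mul_exp_sub_one ℚ
  have hA' : d⁄dX ℚ A * (exp ℚ - 1) + A * exp ℚ = 1 := by
    simpa [Derivation.leibniz, derivative_exp, add_comm, mul_comm] using congrArg (d⁄dX ℚ) hA
  linear_combination (-(X * (exp ℚ - 1))) * hA' + (exp ℚ - 1 + X * exp ℚ) * hA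

/-- The exponential generating function of `-B_n(1/2)`. -/
noncomputable def bernoulliHalfPowerSeries : ℚ⟦X⟧ :=
  bernoulliPowerSeries ℚ - C 2 * rescale 2⁻¹ (bernoulliPowerSeries ℚ)

theorem coeff_bernoulliHalfPowerSeries (n : ℕ) :
    coeff n bernoulliHalfPowerSeries =
      (1 - (2 : ℚ) ^ (1 - (n : ℤ))) * bernoulli n / n.factorial := by
  have h2 : (2 : ℚ) ^ (1 - (n : ℤ)) = 2 * (2 ^ n)⁻¹ := by
    rw [zpow_sub₀ two_ne_zero, zpow_one, zpow_natCast, div_eq_mul_inv]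
  simp only [bernoulliHalfPowerSeries, map_sub, coeff_C_mul, coeff_rescale,
    coeff_bernoulliPowerSeries_rat, h2, inv_pow]
  ring

theorem coeff_bernoulliHalfPowerSeries_of_odd {n : ℕ} (hn : Odd n) :
    coeff n bernoulliHalfPowerSeries = 0 := by
  rw [coeff_bernoulliHalfPowerSeries]
  rcases (Nat.succ_le_of_lt hn.pos).eq_or_lt with h1 | hlt
  · subst h1
    norm_num
  · simp [bernoulli_eq_zero_of_odd hn hlt]

theorem bernoulliHalfPowerSeries_mul_exp_sub_one :
    bernoulliHalfPowerSeries * (exp ℚ - 1) = -(X * rescale 2⁻¹ (exp ℚ)) := by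
  set A := bernoulliPowerSeries ℚ
  set H := rescale (2⁻¹ : ℚ) (exp ℚ)
  have hH : H * H = exp ℚ := by
    rw [exp_mul_exp_eq_exp_add]
    norm_num
  have hA : A * (exp ℚ - 1) = X := bernoulliPowerSeries_mul_exp_sub_one ℚ
  have hA_half : rescale 2⁻¹ A * (H - 1) = C 2⁻¹ * X := by
    simpa using congrArg (rescale (2⁻¹ : ℚ)) hA
  have h2 : C (2 : ℚ) * C 2⁻¹ = 1 := by
    rw [← map_mul]
    norm_num
  rw [bernoulliHalfPowerSeries]
  -- `e^X - 1 = (H - 1) (H + 1)` turns `2 A(X/2) (e^X - 1)` into `X (H + 1)`.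
  linear_combination hA + (C 2 * rescale 2⁻¹ A) * hH - (C 2 * (H + 1)) * hA_half -
    (X * (H + 1)) * h2

theorem bernoulliHalfPowerSeries_sq :
    bernoulliHalfPowerSeries ^ 2 =
      bernoulliPowerSeries ℚ - X * d⁄dX ℚ (bernoulliPowerSeries ℚ) := by
  have hE : (exp ℚ - 1) ^ 2 ≠ 0 := by
    refine pow_ne_zero 2 fun h => ?_
    simpa using congrArg (coeff 1) h
  refine mul_right_cancel₀ hE ?_
  rw [bernoulliPowerSeries_sub_X_mul_derivative_mul_sq, ← mul_pow,
    bernoulliHalfPowerSeries_mul_exp_sub_one, neg_sq, mul_pow, sq (rescale _ _),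
    exp_mul_exp_eq_exp_add]
  norm_num

theorem coeff_two_mul_sq_of_coeff_odd_eq_zero {R : Type*} [CommSemiring R] {f : R⟦X⟧}
    (hf : ∀ k, Odd k → coeff k f = 0) (q : ℕ) :
    coeff (2 * q) (f ^ 2) = ∑ p ∈ range (q + 1), coeff (2 * p) f * coeff (2 * q - 2 * p) f := by
  rw [sq, coeff_mul, Nat.sum_antidiagonal_eq_sum_range_succ_mk]
  exact sum_range_two_mul_add_one_eq_sum_even _ (fun k hk => by simp [hf k hk]) q

end PowerSeries

theorem bernoulli_even_gosper_general (q : ℕ) :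
    ∑ p ∈ Finset.range (q + 1),
        (1 - (2 : ℚ) ^ (1 - (2 * p : ℤ))) * (1 - (2 : ℚ) ^ (1 - (2 * q - 2 * p : ℤ))) *
          bernoulli (2 * p) * bernoulli (2 * q - 2 * p) /
            (((2 * p).factorial : ℚ) * ((2 * q - 2 * p).factorial : ℚ)) =
      -(2 * q - 1 : ℚ) * bernoulli (2 * q) / ((2 * q).factorial : ℚ) := by
  have hcoeff := congrArg (coeff (2 * q)) bernoulliHalfPowerSeries_sq
  rw [coeff_two_mul_sq_of_coeff_odd_eq_zero (fun k => coeff_bernoulliHalfPowerSeries_of_odd),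
    coeff_sub_X_mul_derivative, coeff_bernoulliPowerSeries_rat] at hcoeff
  calc _ = ∑ p ∈ range (q + 1),
        coeff (2 * p) bernoulliHalfPowerSeries *
          coeff (2 * q - 2 * p) bernoulliHalfPowerSeries := by
        refine sum_congr rfl fun p hp => ?_
        have hpq : p ≤ q := Nat.lt_succ_iff.mp (mem_range.mp hp)
        rw [coeff_bernoulliHalfPowerSeries, coeff_bernoulliHalfPowerSeries,
          show ((2 * q - 2 * p : ℕ) : ℤ) = 2 * q - 2 * p by omega]
        push_cast
        ring
    _ = _ := by
        rw [hcoeff]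
        push_cast
        ring

theorem bernoulli_even_gosper (q : ℕ) (hq : 1 ≤ q) :
    ∑ p ∈ Finset.range (q + 1),
        (1 - (2 : ℚ) ^ (1 - (2 * p : ℤ))) * (1 - (2 : ℚ) ^ (1 - (2 * q - 2 * p : ℤ))) *
          bernoulli (2 * p) * bernoulli (2 * q - 2 * p) /
            (((2 * p).factorial : ℚ) * ((2 * q - 2 * p).factorial : ℚ)) =
      -(2 * q - 1 : ℚ) * bernoulli (2 * q) / ((2 * q).factorial : ℚ) :=
  bernoulli_even_gosper_general q
end

section
/- (Gosper's identity) For every integer r >= 2: sum_{p=0}^{r} (1 - 2^{1-p}) * (1 - 2^{1-(r-p)}) * B_p * B_{r-p} / (p! * (r-p)!) = -(r-1) * B_r / r!, where B_k are the Bernoulli numbers. -/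
/-!
Let `B(x) = x / (eˣ - 1) = ∑ Bₙ xⁿ / n!`. The series `F(x) = B(x) - 2 B(x/2)` has coefficients
`(1 - 2^(1-n)) Bₙ / n!`, and since `eˣ - 1 = (e^(x/2) - 1)(e^(x/2) + 1)` it equals
`-x e^(x/2) / (eˣ - 1)`. Hence `F(x)² = x² eˣ / (eˣ - 1)² = B(x) - x B'(x)`, whose coefficients are
`(1 - n) Bₙ / n!`; comparing coefficients of `xʳ` gives the identity.
-/

open PowerSeries

noncomputable def twistedBernoulliSeries : ℚ⟦X⟧ :=
  bernoulliPowerSeries ℚ - C 2 * rescale 2⁻¹ (bernoulliPowerSeries ℚ)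

lemma coeff_twistedBernoulliSeries (n : ℕ) :
    coeff n twistedBernoulliSeries = (1 - (2 : ℚ) ^ (1 - (n : ℤ))) * bernoulli n / n.factorial := by
  have two_zpow : (2 : ℚ) ^ (1 - (n : ℤ)) = 2 * 2⁻¹ ^ n := by
    rw [zpow_sub₀ two_ne_zero, zpow_one, zpow_natCast, inv_pow, div_eq_mul_inv]
  simp only [twistedBernoulliSeries, bernoulliPowerSeries, map_sub, coeff_C_mul, coeff_rescale,
    coeff_mk, Algebra.algebraMap_self_apply, two_zpow]
  ring

lemma coeff_bernoulliPowerSeries_sub_X_mul_derivative (n : ℕ) :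
    coeff n (bernoulliPowerSeries ℚ - X * derivative ℚ (bernoulliPowerSeries ℚ)) =
      -((n : ℚ) - 1) * bernoulli n / n.factorial := by
  cases n with
  | zero => simp [bernoulliPowerSeries]
  | succ m =>
    simp only [map_sub, coeff_succ_X_mul, coeff_derivative, bernoulliPowerSeries, coeff_mk,
      Algebra.algebraMap_self_apply, Nat.factorial_succ]
    push_cast
    field_simp
    ring

lemma rescale_half_exp_mul_self : rescale 2⁻¹ (exp ℚ) * rescale 2⁻¹ (exp ℚ) = exp ℚ := by
  rw [exp_mul_exp_eq_exp_add]
  norm_num [rescale_one]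

lemma twistedBernoulliSeries_mul_exp_sub_one :
    twistedBernoulliSeries * (exp ℚ - 1) = -(X * rescale 2⁻¹ (exp ℚ)) := by
  set H := rescale 2⁻¹ (exp ℚ)
  have half : rescale 2⁻¹ (bernoulliPowerSeries ℚ) * (H - 1) = C 2⁻¹ * X := by
    simpa [rescale_X] using
      congrArg (rescale (2⁻¹ : ℚ)) (bernoulliPowerSeries_mul_exp_sub_one ℚ)
  have factor : exp ℚ - 1 = (H - 1) * (H + 1) := by
    rw [← rescale_half_exp_mul_self]
    ring
  have two_mul_half : C (2 : ℚ) * C 2⁻¹ = 1 := by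
    rw [← map_mul]
    norm_num
  calc twistedBernoulliSeries * (exp ℚ - 1)
      = bernoulliPowerSeries ℚ * (exp ℚ - 1)
          - C 2 * (rescale 2⁻¹ (bernoulliPowerSeries ℚ) * (H - 1)) * (H + 1) := by
        rw [twistedBernoulliSeries, factor]
        ring
    _ = X - C 2 * C 2⁻¹ * X * (H + 1) := by
        rw [bernoulliPowerSeries_mul_exp_sub_one, half]
        ring
    _ = -(X * H) := by
        rw [two_mul_half]
        ring

lemma bernoulliPowerSeries_sub_X_mul_derivative_mul_exp_sub_one_sq :
    (bernoulliPowerSeries ℚ - X * derivative ℚ (bernoulliPowerSeries ℚ)) * (exp ℚ - 1) ^ 2 =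
      X ^ 2 * exp ℚ := by
  have hB := bernoulliPowerSeries_mul_exp_sub_one ℚ
  have hB' := congrArg (derivative ℚ) hB
  rw [Derivation.leibniz, map_sub, derivative_exp, Derivation.map_one_eq_zero, sub_zero,
    derivative_X, smul_eq_mul, smul_eq_mul] at hB'
  linear_combination (exp ℚ - 1 + X * exp ℚ) * hB - X * (exp ℚ - 1) * hB'

lemma twistedBernoulliSeries_mul_self :
    twistedBernoulliSeries * twistedBernoulliSeries =
      bernoulliPowerSeries ℚ - X * derivative ℚ (bernoulliPowerSeries ℚ) := by
  have exp_sub_one_ne_zero : exp ℚ - 1 ≠ 0 := by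
    intro h
    simpa [coeff_exp] using congrArg (coeff 1) h
  refine mul_right_cancel₀ (pow_ne_zero 2 exp_sub_one_ne_zero) ?_
  rw [bernoulliPowerSeries_sub_X_mul_derivative_mul_exp_sub_one_sq]
  linear_combination (twistedBernoulliSeries * (exp ℚ - 1) - X * rescale 2⁻¹ (exp ℚ)) *
    twistedBernoulliSeries_mul_exp_sub_one + X ^ 2 * rescale_half_exp_mul_self

theorem bernoulli_gosper_general (r : ℕ) :
    ∑ p ∈ Finset.range (r + 1),
        (1 - (2 : ℚ) ^ (1 - (p : ℤ))) * (1 - (2 : ℚ) ^ (1 - (r - p : ℤ))) *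
          bernoulli p * bernoulli (r - p) /
            ((p.factorial : ℚ) * ((r - p).factorial : ℚ)) =
      -(r - 1 : ℚ) * bernoulli r / (r.factorial : ℚ) := by
  have key := congrArg (coeff r) twistedBernoulliSeries_mul_self
  rw [coeff_mul, Finset.Nat.sum_antidiagonal_eq_sum_range_succ_mk,
    coeff_bernoulliPowerSeries_sub_X_mul_derivative] at key
  rw [← key]
  refine Finset.sum_congr rfl fun p hp => ?_
  have hpr : p ≤ r := Nat.lt_succ_iff.mp (Finset.mem_range.mp hp)
  rw [coeff_twistedBernoulliSeries, coeff_twistedBernoulliSeries, Nat.cast_sub hpr]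
  ring

theorem bernoulli_gosper (r : ℕ) (hr : 2 ≤ r) :
    ∑ p ∈ Finset.range (r + 1),
        (1 - (2 : ℚ) ^ (1 - (p : ℤ))) * (1 - (2 : ℚ) ^ (1 - (r - p : ℤ))) *
          bernoulli p * bernoulli (r - p) /
            ((p.factorial : ℚ) * ((r - p).factorial : ℚ)) =
      -(r - 1 : ℚ) * bernoulli r / (r.factorial : ℚ) :=
  bernoulli_gosper_general r
end

section
/- Le_{2,1}(1/2) = zeta(3) - (1/2)*zeta(2)*ln 2, i.e., sum over n_1 >= n_2 >= 1 of (1/2)^{n_1}/(n_1^2 * n_2) equals zeta(3) - (pi^2/12)*ln 2. -/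
/-!
Write `H n` for the harmonic numbers; the sum is `∑_{n ≥ 1} H n 2⁻ⁿ / n²`. Squaring the series of
`-log (1 - x)` gives `log² (1 - x) = ∑ 2 H n xⁿ⁺¹ / (n + 1)`, so integrating `log² (1 - x) / x` over
`[0, 1/2]` yields `∑ 2 H n 2⁻ⁿ⁻¹ / (n + 1)²`. The reflection `x ↦ 1 - x` turns the same integral
into `∫_{1/2}^1 log² x / (1 - x)`, which the geometric series evaluates termwise in terms of `ζ(3)`,
`Li₃(1/2)`, `Li₂(1/2)` and `log 2`. As `H (n + 1) = H n + 1 / (n + 1)`, the `Li₃(1/2)` terms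
cancel, and the same reflection applied to `-log (1 - x) / x` gives `Li₂(1/2) = π²/12 - log² 2 / 2`.
-/

open Real MeasureTheory Set Finset

noncomputable def polylog (s : ℕ) (x : ℝ) : ℝ := ∑' n : ℕ, x ^ (n + 1) / ((n : ℝ) + 1) ^ s

lemma summable_norm_pow_succ_div (s : ℕ) {x : ℝ} (hx : |x| < 1) :
    Summable fun n : ℕ => ‖x ^ (n + 1) / ((n : ℝ) + 1) ^ s‖ := by
  refine (summable_geometric_of_lt_one (abs_nonneg x) hx).of_nonneg_of_le
    (fun _ => norm_nonneg _) fun n => ?_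
  rw [norm_div, norm_pow, norm_pow, Real.norm_eq_abs, Real.norm_of_nonneg (by positivity)]
  calc |x| ^ (n + 1) / ((n : ℝ) + 1) ^ s ≤ |x| ^ (n + 1) :=
        div_le_self (by positivity) (one_le_pow₀ (by linarith [n.cast_nonneg (α := ℝ)]))
    _ ≤ |x| ^ n := pow_le_pow_of_le_one (abs_nonneg x) hx.le n.le_succ

lemma hasSum_polylog (s : ℕ) {x : ℝ} (hx : |x| < 1) :
    HasSum (fun n : ℕ => x ^ (n + 1) / ((n : ℝ) + 1) ^ s) (polylog s x) :=
  (summable_norm_pow_succ_div s hx).of_norm.hasSum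

lemma hasSum_polylog_half (s : ℕ) :
    HasSum (fun n : ℕ => (1 / 2 : ℝ) ^ (n + 1) / ((n : ℝ) + 1) ^ s) (polylog s (1 / 2)) :=
  hasSum_polylog s (by norm_num [abs_of_pos])

lemma hasSum_polylog_at_one {s : ℕ} (hs : 2 ≤ s) :
    HasSum (fun n : ℕ => 1 / ((n : ℝ) + 1) ^ s) (polylog s 1) := by
  have h := (summable_nat_add_iff 1).mpr (Real.summable_one_div_nat_pow.mpr hs)
  push_cast at h
  simpa [polylog] using h.hasSum

lemma polylog_one {x : ℝ} (hx : |x| < 1) : polylog 1 x = -log (1 - x) := by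
  refine (hasSum_polylog 1 hx).unique ?_
  simpa using hasSum_pow_div_log_of_abs_lt_one hx

lemma polylog_one_half : polylog 1 (1 / 2) = log 2 := by
  rw [polylog_one (by norm_num [abs_of_pos]), ← log_inv]
  norm_num

lemma polylog_two_one : polylog 2 1 = π ^ 2 / 6 := by
  refine (hasSum_polylog_at_one le_rfl).unique ?_
  have h := (hasSum_nat_add_iff' 1).mpr hasSum_zeta_two
  push_cast at h
  simpa using h

lemma harmonic_nonneg (n : ℕ) : 0 ≤ (harmonic n : ℝ) := by
  unfold harmonic
  positivity

lemma harmonic_le_self (n : ℕ) : harmonic n ≤ n := by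
  calc harmonic n = ∑ i ∈ range n, ((i + 1 : ℕ) : ℚ)⁻¹ := rfl
    _ ≤ ∑ _i ∈ range n, (1 : ℚ) :=
      sum_le_sum fun i _ => inv_le_one_of_one_le₀ (by exact_mod_cast i.succ_pos)
    _ = n := by simp

lemma sum_antidiagonal_one_div_mul (N : ℕ) :
    ∑ p ∈ antidiagonal N, 1 / (((p.1 : ℝ) + 1) * ((p.2 : ℝ) + 1)) =
      2 * harmonic (N + 1) / ((N : ℝ) + 2) := by
  have hsplit : ∀ p ∈ antidiagonal N, 1 / (((p.1 : ℝ) + 1) * ((p.2 : ℝ) + 1)) =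
      (1 / ((p.1 : ℝ) + 1) + 1 / ((p.2 : ℝ) + 1)) / ((N : ℝ) + 2) := fun p hp => by
    have hN : (p.1 : ℝ) + p.2 = N := by exact_mod_cast mem_antidiagonal.mp hp
    field_simp
    linarith
  have hswap : ∑ p ∈ antidiagonal N, 1 / ((p.2 : ℝ) + 1) =
      ∑ p ∈ antidiagonal N, 1 / ((p.1 : ℝ) + 1) :=
    Nat.sum_antidiagonal_swap (f := fun p => 1 / ((p.1 : ℝ) + 1))
  rw [sum_congr rfl hsplit, ← sum_div, sum_add_distrib, hswap,
    Nat.sum_antidiagonal_eq_sum_range_succ_mk]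
  simp [harmonic]
  ring

lemma hasSum_log_one_sub_sq {x : ℝ} (hx : |x| < 1) :
    HasSum (fun n : ℕ => 2 * harmonic n * x ^ (n + 1) / ((n : ℝ) + 1)) (log (1 - x) ^ 2) := by
  have ha := summable_norm_pow_succ_div 1 hx
  have hcauchy : HasSum (fun N : ℕ => ∑ p ∈ antidiagonal N,
      x ^ (p.1 + 1) / ((p.1 : ℝ) + 1) ^ 1 * (x ^ (p.2 + 1) / ((p.2 : ℝ) + 1) ^ 1))
      (log (1 - x) ^ 2) := by
    rw [sq, ← neg_mul_neg, ← polylog_one hx]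
    exact tsum_mul_tsum_eq_tsum_sum_antidiagonal_of_summable_norm ha ha ▸
      (summable_norm_sum_mul_antidiagonal_of_summable_norm ha ha).of_norm.hasSum
  refine (hasSum_nat_add_iff' 1).mp ?_
  simp only [sum_range_one, harmonic_zero, Rat.cast_zero, mul_zero, zero_mul, zero_div, sub_zero]
  refine hcauchy.congr_fun fun N => ?_
  have hterm : ∀ p ∈ antidiagonal N,
      x ^ (p.1 + 1) / ((p.1 : ℝ) + 1) ^ 1 * (x ^ (p.2 + 1) / ((p.2 : ℝ) + 1) ^ 1) =
        x ^ (N + 2) * (1 / (((p.1 : ℝ) + 1) * ((p.2 : ℝ) + 1))) := fun p hp => by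
    rw [← mem_antidiagonal.mp hp, pow_one, pow_one, div_mul_div_comm, ← pow_add]
    ring
  rw [sum_congr rfl hterm, ← mul_sum, sum_antidiagonal_one_div_mul]
  push_cast
  ring

/- Pointwise expansion is required only on the open interval: at the endpoints the integrands
below take junk values, e.g. `-log (1 - 0) / 0 = 0` while the series gives `1`. -/
lemma intervalIntegral_eq_of_hasSum_of_nonneg {a b I : ℝ} {f : ℕ → ℝ → ℝ} {g : ℝ → ℝ}
    (hab : a ≤ b) (hfg : ∀ x ∈ Ioo a b, HasSum (fun k => f k x) (g x))
    (hf : ∀ k, IntervalIntegrable (f k) volume a b) (hf₀ : ∀ k, ∀ x ∈ Ioo a b, 0 ≤ f k x)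
    (hI : HasSum (fun k => ∫ x in a..b, f k x) I) :
    ∫ x in a..b, g x = I := by
  simp only [intervalIntegral.integral_of_le hab, integral_Ioc_eq_integral_Ioo] at hI ⊢
  have hnorm : ∀ k, ∫ x in Ioo a b, ‖f k x‖ = ∫ x in Ioo a b, f k x := fun k =>
    setIntegral_congr_fun measurableSet_Ioo fun x hx => Real.norm_of_nonneg (hf₀ k x hx)
  rw [setIntegral_congr_fun measurableSet_Ioo fun x hx => (hfg x hx).tsum_eq.symm,
    ← integral_tsum_of_summable_integral_norm (fun k => (hf k).1.mono_set Ioo_subset_Ioc_self)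
      (by simpa only [hnorm] using hI.summable), hI.tsum_eq]

lemma integral_comp_one_sub_div_zero_half (g : ℝ → ℝ) :
    ∫ x in (0 : ℝ)..1 / 2, g (1 - x) / x = ∫ u in (1 / 2 : ℝ)..1, g u / (1 - u) := by
  have h := intervalIntegral.integral_comp_sub_left (fun u => g u / (1 - u))
    (a := 0) (b := 1 / 2) 1
  norm_num at h
  exact h

lemma integral_pow_mul_neg_log {y : ℝ} (hy : 0 < y) (k : ℕ) :
    ∫ x in y..1, x ^ k * -log x =
      (1 - y ^ (k + 1)) / ((k : ℝ) + 1) ^ 2 + y ^ (k + 1) * log y / ((k : ℝ) + 1) := by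
  have hpos : ∀ x ∈ uIcc y 1, 0 < x := fun x hx => (lt_min hy one_pos).trans_le hx.1
  have hk : (k : ℝ) + 1 ≠ 0 := by positivity
  have hderiv : ∀ x ∈ uIcc y 1, HasDerivAt
      (fun x => x ^ (k + 1) / ((k : ℝ) + 1) ^ 2 - x ^ (k + 1) * log x / ((k : ℝ) + 1))
      (x ^ k * -log x) x := fun x hx => by
    have hp := hasDerivAt_pow (k + 1) x
    have h := (hp.div_const (((k : ℝ) + 1) ^ 2)).sub
      ((hp.mul (hasDerivAt_log (hpos x hx).ne')).div_const ((k : ℝ) + 1))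
    refine h.congr_deriv ?_
    have := (hpos x hx).ne'
    rw [Nat.add_sub_cancel]
    push_cast
    field_simp
    ring
  have hcont : ContinuousOn (fun x => x ^ k * -log x) (uIcc y 1) :=
    (continuousOn_pow k).mul (continuousOn_log.mono fun x hx => (hpos x hx).ne').neg
  rw [intervalIntegral.integral_eq_sub_of_hasDerivAt hderiv hcont.intervalIntegrable]
  simp only [one_pow, log_one, mul_zero, zero_div, sub_zero]
  ring

lemma integral_pow_mul_log_sq {y : ℝ} (hy : 0 < y) (k : ℕ) :
    ∫ x in y..1, x ^ k * log x ^ 2 =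
      2 * (1 - y ^ (k + 1)) / ((k : ℝ) + 1) ^ 3 + 2 * y ^ (k + 1) * log y / ((k : ℝ) + 1) ^ 2
        - y ^ (k + 1) * log y ^ 2 / ((k : ℝ) + 1) := by
  have hpos : ∀ x ∈ uIcc y 1, 0 < x := fun x hx => (lt_min hy one_pos).trans_le hx.1
  have hk : (k : ℝ) + 1 ≠ 0 := by positivity
  have hderiv : ∀ x ∈ uIcc y 1, HasDerivAt
      (fun x => x ^ (k + 1) * log x ^ 2 / ((k : ℝ) + 1)
        - 2 * x ^ (k + 1) * log x / ((k : ℝ) + 1) ^ 2 + 2 * x ^ (k + 1) / ((k : ℝ) + 1) ^ 3)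
      (x ^ k * log x ^ 2) x := fun x hx => by
    have hp := hasDerivAt_pow (k + 1) x
    have hl := hasDerivAt_log (hpos x hx).ne'
    have h := (((hp.mul (hl.pow 2)).div_const ((k : ℝ) + 1)).sub
      (((hp.const_mul 2).mul hl).div_const (((k : ℝ) + 1) ^ 2))).add
      ((hp.const_mul 2).div_const (((k : ℝ) + 1) ^ 3))
    refine h.congr_deriv ?_
    have := (hpos x hx).ne'
    simp only [Nat.add_sub_cancel, Pi.pow_apply]
    push_cast
    field_simp
    ring
  have hcont : ContinuousOn (fun x => x ^ k * log x ^ 2) (uIcc y 1) :=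
    (continuousOn_pow k).mul ((continuousOn_log.mono fun x hx => (hpos x hx).ne').pow 2)
  rw [intervalIntegral.integral_eq_sub_of_hasDerivAt hderiv hcont.intervalIntegrable]
  simp only [one_pow, log_one, mul_zero, zero_div, sub_zero]
  ring

lemma integral_neg_log_one_sub_div :
    ∫ x in (0 : ℝ)..1 / 2, -log (1 - x) / x = polylog 2 (1 / 2) := by
  refine intervalIntegral_eq_of_hasSum_of_nonneg (f := fun k x => x ^ k / ((k : ℝ) + 1))
    (by norm_num) (fun x hx => ?_) (fun k => ?_) (fun k x hx => by have := hx.1.le; positivity)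
    ((hasSum_polylog_half 2).congr_fun fun k => ?_)
  · have hx0 := hx.1.ne'
    have habs : |x| < 1 := abs_lt.mpr ⟨by linarith [hx.1], by linarith [hx.2]⟩
    refine ((hasSum_pow_div_log_of_abs_lt_one habs).div_const x).congr_fun fun k => ?_
    field_simp
    ring
  · exact (by fun_prop : Continuous fun x : ℝ => x ^ k / ((k : ℝ) + 1)).intervalIntegrable _ _
  · rw [intervalIntegral.integral_div, integral_pow]
    field_simp
    ring

lemma integral_neg_log_div_one_sub :
    ∫ x in (1 / 2 : ℝ)..1, -log x / (1 - x) = polylog 2 1 - polylog 2 (1 / 2) - log 2 * log 2 := by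
  have h := ((hasSum_polylog_at_one le_rfl).sub (hasSum_polylog_half 2)).sub
    ((hasSum_polylog_half 1).mul_left (log 2))
  rw [polylog_one_half] at h
  refine intervalIntegral_eq_of_hasSum_of_nonneg (f := fun k x => x ^ k * -log x)
    (by norm_num) (fun x hx => ?_) (fun k => ?_) (fun k x hx => ?_) (h.congr_fun fun k => ?_)
  · rw [div_eq_inv_mul]
    exact (hasSum_geometric_of_lt_one (by linarith [hx.1]) hx.2).mul_right _
  · refine ContinuousOn.intervalIntegrable ?_
    rw [Set.uIcc_of_le (by norm_num)]
    exact (continuousOn_pow k).mul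
      (continuousOn_log.mono fun x hx => (one_half_pos.trans_le hx.1).ne').neg
  · exact mul_nonneg (pow_nonneg (by linarith [hx.1]) k)
      (neg_nonneg.mpr (log_nonpos (by linarith [hx.1]) hx.2.le))
  · rw [integral_pow_mul_neg_log (by norm_num), one_div 2, log_inv]
    ring

lemma polylog_two_half : polylog 2 (1 / 2) = π ^ 2 / 12 - log 2 ^ 2 / 2 := by
  have h := integral_comp_one_sub_div_zero_half fun u => -log u
  beta_reduce at h
  rw [integral_neg_log_one_sub_div, integral_neg_log_div_one_sub, polylog_two_one] at h
  linarith

lemma summable_two_mul_harmonic_mul_half_pow_div_sq :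
    Summable fun n : ℕ => 2 * harmonic n * (1 / 2 : ℝ) ^ (n + 1) / ((n : ℝ) + 1) ^ 2 := by
  refine (summable_geometric_of_lt_one (by norm_num) (by norm_num : (1 / 2 : ℝ) < 1))
    |>.of_nonneg_of_le (fun n => by have := harmonic_nonneg n; positivity) fun n => ?_
  have hH : (harmonic n : ℝ) ≤ ((n : ℝ) + 1) ^ 2 := by
    have : (harmonic n : ℝ) ≤ n := by exact_mod_cast harmonic_le_self n
    nlinarith
  calc 2 * harmonic n * (1 / 2 : ℝ) ^ (n + 1) / ((n : ℝ) + 1) ^ 2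
      = (1 / 2 : ℝ) ^ n * (harmonic n / ((n : ℝ) + 1) ^ 2) := by ring
    _ ≤ (1 / 2 : ℝ) ^ n :=
      mul_le_of_le_one_right (by positivity) ((div_le_one (by positivity)).mpr hH)

lemma hasSum_integral_log_one_sub_sq_div :
    HasSum (fun n : ℕ => 2 * harmonic n * (1 / 2 : ℝ) ^ (n + 1) / ((n : ℝ) + 1) ^ 2)
      (∫ x in (0 : ℝ)..1 / 2, log (1 - x) ^ 2 / x) := by
  have hs := summable_two_mul_harmonic_mul_half_pow_div_sq
  rw [intervalIntegral_eq_of_hasSum_of_nonneg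
    (f := fun n x => 2 * harmonic n * x ^ n / ((n : ℝ) + 1))
    (by norm_num) (fun x hx => ?_) (fun k => ?_)
    (fun k x hx => by have := hx.1.le; have := harmonic_nonneg k; positivity)
    (hs.hasSum.congr_fun fun n => ?_)]
  · exact hs.hasSum
  · have hx0 := hx.1.ne'
    have habs : |x| < 1 := abs_lt.mpr ⟨by linarith [hx.1], by linarith [hx.2]⟩
    refine ((hasSum_log_one_sub_sq habs).div_const x).congr_fun fun n => ?_
    field_simp
    ring
  · exact (by fun_prop : Continuous fun x : ℝ => 2 * harmonic k * x ^ k / ((k : ℝ) + 1))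
      |>.intervalIntegrable _ _
  · rw [intervalIntegral.integral_div, intervalIntegral.integral_const_mul, integral_pow]
    field_simp
    ring

lemma integral_log_sq_div_one_sub :
    ∫ x in (1 / 2 : ℝ)..1, log x ^ 2 / (1 - x) = 2 * polylog 3 1 - 2 * polylog 3 (1 / 2)
      - 2 * log 2 * polylog 2 (1 / 2) - log 2 ^ 2 * log 2 := by
  have h := ((((hasSum_polylog_at_one (s := 3) (by norm_num)).mul_left 2).sub
    ((hasSum_polylog_half 3).mul_left 2)).sub ((hasSum_polylog_half 2).mul_left (2 * log 2))).sub
    ((hasSum_polylog_half 1).mul_left (log 2 ^ 2))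
  rw [polylog_one_half] at h
  refine intervalIntegral_eq_of_hasSum_of_nonneg (f := fun k x => x ^ k * log x ^ 2)
    (by norm_num) (fun x hx => ?_) (fun k => ?_)
    (fun k x hx => mul_nonneg (pow_nonneg (by linarith [hx.1]) k) (sq_nonneg _))
    (h.congr_fun fun k => ?_)
  · rw [div_eq_inv_mul]
    exact (hasSum_geometric_of_lt_one (by linarith [hx.1]) hx.2).mul_right _
  · refine ContinuousOn.intervalIntegrable ?_
    rw [Set.uIcc_of_le (by norm_num)]
    exact (continuousOn_pow k).mul
      ((continuousOn_log.mono fun x hx => (one_half_pos.trans_le hx.1).ne').pow 2)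
  · rw [integral_pow_mul_log_sq (by norm_num), one_div 2, log_inv]
    ring

lemma hasSum_half_pow_div_sq_mul_harmonic :
    HasSum (fun n : ℕ => (1 / 2 : ℝ) ^ n / (n : ℝ) ^ 2 * harmonic n)
      (polylog 3 1 - log 2 ^ 3 / 2 - log 2 * polylog 2 (1 / 2)) := by
  have hreflect := integral_comp_one_sub_div_zero_half fun u => log u ^ 2
  beta_reduce at hreflect
  have h := hasSum_integral_log_one_sub_sq_div
  rw [hreflect, integral_log_sq_div_one_sub] at h
  refine (hasSum_nat_add_iff' 1).mp ?_
  simp only [sum_range_one, harmonic_zero, Rat.cast_zero, mul_zero, sub_zero]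
  rw [show polylog 3 1 - log 2 ^ 3 / 2 - log 2 * polylog 2 (1 / 2) = (2 * polylog 3 1
    - 2 * polylog 3 (1 / 2) - 2 * log 2 * polylog 2 (1 / 2) - log 2 ^ 2 * log 2) / 2
    + polylog 3 (1 / 2) by ring]
  refine ((h.div_const 2).add (hasSum_polylog_half 3)).congr_fun fun n => ?_
  rw [harmonic_succ]
  push_cast
  field_simp

lemma tsum_triangle_div_eq_tsum_mul_harmonic {a : ℕ → ℝ} (ha : ∀ n, 0 ≤ a n)
    (hs : Summable fun n => a n * harmonic n) :
    ∑' p : {p : ℕ × ℕ // p.2 ≤ p.1 ∧ 1 ≤ p.2}, a p.1.1 / p.1.2 = ∑' n, a n * harmonic n := by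
  have hfiber : ∀ n, HasSum (fun m : {m : ℕ // m ≤ n ∧ 1 ≤ m} => a n / m) (a n * harmonic n) := by
    intro n
    let e : {m // m ∈ Finset.Icc 1 n} ≃ {m : ℕ // m ≤ n ∧ 1 ≤ m} :=
      Equiv.subtypeEquivRight fun m => by rw [Finset.mem_Icc, and_comm]
    rw [← e.hasSum_iff, harmonic_eq_sum_Icc]
    push_cast
    simp only [mul_sum, div_eq_mul_inv]
    exact Finset.hasSum (Finset.Icc 1 n) fun m : ℕ => a n * (m : ℝ)⁻¹
  have hsum : Summable fun x : Σ n, {m : ℕ // m ≤ n ∧ 1 ≤ m} => a x.1 / x.2 :=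
    (summable_sigma_of_nonneg fun x => div_nonneg (ha _) x.2.1.cast_nonneg).mpr
      ⟨fun n => (hfiber n).summable, by simpa only [(hfiber _).tsum_eq] using hs⟩
  rw [← (Equiv.subtypeProdEquivSigmaSubtype fun n m : ℕ => m ≤ n ∧ 1 ≤ m).symm.tsum_eq]
  exact (hsum.hasSum.sigma hfiber).unique hs.hasSum

theorem Le_two_one_half :
    ∑' p : {p : ℕ × ℕ // p.2 ≤ p.1 ∧ 1 ≤ p.2},
        (1 / 2 : ℝ) ^ p.1.1 / ((p.1.1 : ℝ) ^ 2 * p.1.2) =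
      (∑' m : ℕ, 1 / (m + 1 : ℝ) ^ 3) - (Real.pi ^ 2 / 12) * Real.log 2 := by
  have hS := hasSum_half_pow_div_sq_mul_harmonic
  simp_rw [← div_div]
  rw [tsum_triangle_div_eq_tsum_mul_harmonic (fun n => by positivity) hS.summable, hS.tsum_eq,
    polylog_two_half]
  simp only [polylog, one_pow]
  ring
end
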